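/- (Universal property of skew PBW extensions.) Let A be a skew PBW extension of a ring R with respect to x₁,…,xₙ, with parameters σᵢ, δᵢ, c_{ij}, d_{ij}, a_{ij}^{(k)}. Let B be a ring, φ : R → B a ring homomorphism, and y₁,…,yₙ ∈ B elements such that: (i) yᵢ φ(r) = φ(σᵢ(r)) yᵢ + φ(δᵢ(r)) for every r ∈ R and 1 ≤ i ≤ n; (ii) y_j yᵢ = φ(c_{ij}) yᵢ y_j + φ(a_{ij}^{(1)}) y₁ + ⋯ + φ(a_{ij}^{(n)}) yₙ + φ(d_{ij}) for all 1 ≤ i < j ≤ n. Then there exists a unique ring homomorphism φ̃ : A → B such that φ̃ ∘ ι = φ and φ̃(xᵢ) = yᵢ for every i, where ι : R → A is the inclusion. -/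

import Mathlib

/-! ## Skew PBW extensions -/

/-- The standard monomial `x₁^{α₁} ⋯ xₙ^{αₙ}`, the factors taken in increasing index order. -/
def xmon {A : Type} [Ring A] {n : ℕ} (x : Fin n → A) (α : Fin n → ℕ) : A :=
  ((List.finRange n).map (fun i => x i ^ α i)).prod

/-- `A` is a skew PBW extension of the subring `S ⊆ A` with respect to `x₁,…,xₙ`. -/
structure IsSkewPBWExt {A : Type} [Ring A] {n : ℕ} (S : Subring A) (x : Fin n → A) : Prop where
  linearIndependent : LinearIndependent S (xmon x)
  spans : Submodule.span S (Set.range (xmon x)) = ⊤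
  comm_coeff : ∀ (i : Fin n) (r : A), r ∈ S → r ≠ 0 →
    ∃ c ∈ S, c ≠ 0 ∧ x i * r - c * x i ∈ S
  comm_vars : ∀ i j : Fin n, ∃ c ∈ S, c ≠ 0 ∧
    x j * x i - c * (x i * x j) ∈ Submodule.span S (insert (1 : A) (Set.range x))

/-!
Since `A` is free over `R` on the standard monomials, there is a unique additive map
`Ψ : A → B` with `Ψ (r * x^α) = φ r * y^α`, and it satisfies `Ψ (r * u) = φ r * Ψ u`. It is
multiplicative as soon as `Ψ (x i * u) = y i * Ψ u` for all `i` and `u`. For `u` of degree at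
most `m` this is proved by induction on `(m, i)` in lexicographic order, together with the fact
that `x i * u` has degree at most `m + 1`. Coefficients pass `x i` by
`x i * r = σ i r * x i + δ i r`, which `φ` mirrors by (i); a standard monomial `x j * x^β` with
`j < i` is rewritten by `x i * x j = c * x j * x i + ∑ a_k * x k + d`, mirrored in `B` by (ii),
which only involves the cases `(m - 1, ·)` and `(m, j)`. Uniqueness holds because `R` and the
`x i` generate `A`.
-/

section Monomials

variable {A : Type} [Ring A] {n : ℕ}

theorem xmon_zero (x : Fin n → A) : xmon x 0 = 1 := by
  simp [xmon]

theorem map_xmon {B : Type} [Ring B] (f : A →+* B) (x : Fin n → A) (α : Fin n → ℕ) :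
    f (xmon x α) = xmon (f ∘ x) α := by
  simp [xmon, map_list_prod, List.map_map, Function.comp_def]

theorem xmon_succ (x : Fin (n + 1) → A) (α : Fin (n + 1) → ℕ) :
    xmon x α = x 0 ^ α 0 * xmon (x ∘ Fin.succ) (α ∘ Fin.succ) := by
  simp [xmon, List.finRange_succ, List.map_map, Function.comp_def]

theorem mul_xmon_of_forall_lt (x : Fin n → A) (α : Fin n → ℕ) (i : Fin n)
    (h : ∀ k < i, α k = 0) : x i * xmon x α = xmon x (α + Pi.single i 1) := by
  induction n with
  | zero => exact i.elim0
  | succ n ih =>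
    rw [xmon_succ, xmon_succ]
    induction i using Fin.cases with
    | zero =>
      have htail : (α + Pi.single 0 1) ∘ Fin.succ = α ∘ Fin.succ := by
        funext k
        simp [Fin.succ_ne_zero]
      simp [htail, pow_succ', mul_assoc]
    | succ j =>
      have htail : (α + Pi.single j.succ 1) ∘ Fin.succ = α ∘ Fin.succ + Pi.single j 1 := by
        funext k
        simp [Pi.single_apply, Fin.succ_inj]
      have hj := ih (x ∘ Fin.succ) (α ∘ Fin.succ) j fun k hk =>
        h k.succ (Fin.succ_lt_succ_iff.mpr hk)
      simp only [Function.comp_apply] at hj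
      simp [h 0 (Fin.succ_pos j), (Fin.succ_ne_zero j).symm, htail, hj]

theorem sum_add_single_one (α : Fin n → ℕ) (i : Fin n) :
    ∑ k, (α + Pi.single i 1 : Fin n → ℕ) k = ∑ k, α k + 1 := by
  simp [Finset.sum_add_distrib]

theorem exists_eq_add_single_of_exists_lt {α : Fin n → ℕ} {i : Fin n} (h : ∃ k < i, α k ≠ 0) :
    ∃ j < i, ∃ β : Fin n → ℕ, (∀ k < j, β k = 0) ∧ α = β + Pi.single j 1 := by
  obtain ⟨k, hki, hk⟩ := h
  obtain ⟨j, hj, hmin⟩ := wellFounded_lt.has_min {k | α k ≠ 0} ⟨k, hk⟩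
  refine ⟨j, lt_of_le_of_lt (not_lt.mp (hmin k hk)) hki, Function.update α j (α j - 1),
    fun l hl => ?_, ?_⟩
  · have : α l = 0 := by_contra fun hl' => hmin l hl' hl
    simp [hl.ne, this]
  · funext l
    rcases eq_or_ne l j with rfl | hlj
    · have : α l ≠ 0 := hj
      simp
      omega
    · simp [hlj]

end Monomials

def xmonDegreeLE {A : Type} [Ring A] {n : ℕ} (S : Subring A) (x : Fin n → A) (m : ℕ) :
    Submodule S A :=
  Submodule.span S (xmon x '' {α | ∑ k, α k ≤ m})

section Filtration

variable {A : Type} [Ring A] {n : ℕ} {S : Subring A} {x : Fin n → A}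

theorem xmon_mem_xmonDegreeLE {α : Fin n → ℕ} {m : ℕ} (h : ∑ k, α k ≤ m) :
    xmon x α ∈ xmonDegreeLE S x m :=
  Submodule.subset_span ⟨α, h, rfl⟩

theorem xmonDegreeLE_mono : Monotone (xmonDegreeLE S x) :=
  fun _ _ h => Submodule.span_mono (Set.image_mono fun _ hα => le_trans hα h)

end Filtration

theorem mul_mul_eq_of_commutation {R ι : Type*} [Ring R] [Fintype ι] {p q c d : R} {a z : ι → R}
    (h : q * p = c * (p * q) + ∑ k, a k * z k + d) (v : R) :
    q * (p * v) = c * (p * (q * v)) + ∑ k, a k * (z k * v) + d * v := by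
  simp only [← mul_assoc, h, add_mul, Finset.sum_mul]

namespace IsSkewPBWExt

variable {A : Type} [Ring A] {n : ℕ} {S : Subring A} {x : Fin n → A}

theorem induction_on (hA : IsSkewPBWExt S x) {p : A → Prop} (u : A) (monomial : ∀ α, p (xmon x α))
    (add : ∀ u v, p u → p v → p (u + v)) (mul_left : ∀ (r : S) u, p u → p (r * u)) : p u := by
  have hu : u ∈ Submodule.span S (Set.range (xmon x)) := hA.spans ▸ Submodule.mem_top
  induction hu using Submodule.span_induction with
  | mem u hu => obtain ⟨α, rfl⟩ := hu; exact monomial α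
  | zero => simpa using mul_left 0 _ (monomial 0)
  | add u v _ _ hu hv => exact add u v hu hv
  | smul r u _ hu => exact mul_left r u hu

theorem ringHom_ext (hA : IsSkewPBWExt S x) {B : Type} [Ring B] {f g : A →+* B}
    (hS : ∀ r : S, f r = g r) (hx : ∀ i, f (x i) = g (x i)) : f = g := by
  have hfg : f ∘ x = g ∘ x := funext hx
  ext u
  induction u using hA.induction_on with
  | monomial α => rw [map_xmon, map_xmon, hfg]
  | add u v hu hv => rw [map_add, map_add, hu, hv]
  | mul_left r u hu => rw [map_mul, map_mul, hu, hS]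

theorem exists_mem_xmonDegreeLE (hA : IsSkewPBWExt S x) (u : A) :
    ∃ m, u ∈ xmonDegreeLE S x m := by
  induction u using hA.induction_on with
  | monomial α => exact ⟨_, xmon_mem_xmonDegreeLE le_rfl⟩
  | add u v hu hv =>
    obtain ⟨m, hu⟩ := hu
    obtain ⟨m', hv⟩ := hv
    exact ⟨max m m', add_mem (xmonDegreeLE_mono (le_max_left m m') hu)
      (xmonDegreeLE_mono (le_max_right m m') hv)⟩
  | mul_left r u hu =>
    obtain ⟨m, hu⟩ := hu
    exact ⟨m, Submodule.smul_mem _ r hu⟩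

variable (hA : IsSkewPBWExt S x)

noncomputable def basis : Module.Basis (Fin n → ℕ) S A :=
  .mk hA.linearIndependent hA.spans.ge

variable {B : Type} [Ring B] (φ : S →+* B) (y : Fin n → B)

noncomputable def lift : A →+ B :=
  (Finsupp.liftAddHom fun α => (AddMonoidHom.mulRight (xmon y α)).comp φ.toAddMonoidHom).comp
    hA.basis.repr.toAddMonoidHom

theorem lift_coe_mul_xmon (r : S) (α : Fin n → ℕ) :
    hA.lift φ y (r * xmon x α) = φ r * xmon y α := by
  have hrepr : hA.basis.repr (r * xmon x α) = Finsupp.single α r := by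
    have hb : (r : A) * xmon x α = r • hA.basis α := by rw [basis, Module.Basis.mk_apply]; rfl
    rw [hb, map_smul, Module.Basis.repr_self, Finsupp.smul_single, smul_eq_mul, mul_one]
  simp [lift, hrepr]

theorem lift_xmon (α : Fin n → ℕ) : hA.lift φ y (xmon x α) = xmon y α := by
  simpa using hA.lift_coe_mul_xmon φ y 1 α

theorem lift_one : hA.lift φ y 1 = 1 := by
  simpa [xmon_zero] using hA.lift_xmon φ y 0

theorem lift_coe (r : S) : hA.lift φ y r = φ r := by
  simpa [xmon_zero] using hA.lift_coe_mul_xmon φ y r 0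

theorem lift_coe_mul (r : S) (u : A) : hA.lift φ y (r * u) = φ r * hA.lift φ y u := by
  induction u using hA.induction_on generalizing r with
  | monomial α => rw [lift_coe_mul_xmon, lift_xmon]
  | add u v hu hv => rw [mul_add, map_add, map_add, hu, hv, mul_add]
  | mul_left s u hu => rw [← mul_assoc, ← Subring.coe_mul, hu, hu, map_mul, mul_assoc]

def LiftIntertwines (m : ℕ) (i : Fin n) : Prop :=
  ∀ u ∈ xmonDegreeLE S x m,
    x i * u ∈ xmonDegreeLE S x (m + 1) ∧ hA.lift φ y (x i * u) = y i * hA.lift φ y u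

variable {σ : Fin n → S →+* S} {δ : Fin n → S → S} {c d : Fin n → Fin n → S}
  {a : Fin n → Fin n → Fin n → S}

theorem liftIntertwines_of_xmon
    (hσδ : ∀ (i : Fin n) (r : S), x i * (r : A) = (σ i r : A) * x i + (δ i r : A))
    (hy1 : ∀ (i : Fin n) (r : S), y i * φ r = φ (σ i r) * y i + φ (δ i r)) {m : ℕ} {i : Fin n}
    (hxmon : ∀ α : Fin n → ℕ, ∑ k, α k ≤ m → x i * xmon x α ∈ xmonDegreeLE S x (m + 1) ∧
      hA.lift φ y (x i * xmon x α) = y i * xmon y α) :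
    hA.LiftIntertwines φ y m i := by
  intro u hu
  induction hu using Submodule.span_induction with
  | mem u hu =>
    obtain ⟨α, hα, rfl⟩ := hu
    rw [lift_xmon]
    exact hxmon α hα
  | zero => simp
  | add u v _ _ hu hv =>
    rw [mul_add, map_add, map_add, mul_add, hu.2, hv.2]
    exact ⟨add_mem hu.1 hv.1, rfl⟩
  | smul r u hu ih =>
    have hxr : x i * (r • u) = σ i r • (x i * u) + δ i r • u := by
      simp only [Subring.smul_def, smul_eq_mul, ← mul_assoc, hσδ, add_mul]
    rw [hxr]
    refine ⟨add_mem (Submodule.smul_mem _ _ ih.1)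
      (Submodule.smul_mem _ _ (xmonDegreeLE_mono m.le_succ hu)), ?_⟩
    simp only [Subring.smul_def, smul_eq_mul, map_add, lift_coe_mul, ih.2]
    rw [← mul_assoc, ← add_mul, ← hy1, mul_assoc]

theorem liftIntertwines_xmon_add_single
    (hcda : ∀ i j : Fin n, i < j →
      x j * x i = (c i j : A) * (x i * x j) + (∑ k, (a i j k : A) * x k) + (d i j : A))
    (hy2 : ∀ i j : Fin n, i < j →
      y j * y i = φ (c i j) * (y i * y j) + (∑ k, φ (a i j k) * y k) + φ (d i j))
    {M : ℕ} {i j : Fin n} (hji : j < i) (hM : ∀ k, hA.LiftIntertwines φ y M k)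
    (hj : hA.LiftIntertwines φ y (M + 1) j) {β : Fin n → ℕ} (hβ : ∀ k < j, β k = 0)
    (hβM : ∑ k, β k ≤ M) :
    x i * xmon x (β + Pi.single j 1) ∈ xmonDegreeLE S x (M + 2) ∧
      hA.lift φ y (x i * xmon x (β + Pi.single j 1)) = y i * xmon y (β + Pi.single j 1) := by
  have hxβ : xmon x β ∈ xmonDegreeLE S x M := xmon_mem_xmonDegreeLE hβM
  obtain ⟨hxi_mem, hxi_lift⟩ := hM i _ hxβ
  obtain ⟨hxji_mem, hxji_lift⟩ := hj _ hxi_mem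
  rw [← mul_xmon_of_forall_lt x β j hβ, ← mul_xmon_of_forall_lt y β j hβ,
    mul_mul_eq_of_commutation (hcda j i hji), mul_mul_eq_of_commutation (hy2 j i hji)]
  refine ⟨add_mem (add_mem ?_ (sum_mem fun k _ => ?_)) ?_, ?_⟩
  · exact Submodule.smul_mem _ (c j i) hxji_mem
  · exact Submodule.smul_mem _ _ (xmonDegreeLE_mono (M + 1).le_succ (hM k _ hxβ).1)
  · exact Submodule.smul_mem _ _ (xmonDegreeLE_mono (by omega) hxβ)
  · simp only [map_add, map_sum, lift_coe_mul, hxji_lift, hxi_lift, (hM _ _ hxβ).2, lift_xmon]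

theorem liftIntertwines
    (hσδ : ∀ (i : Fin n) (r : S), x i * (r : A) = (σ i r : A) * x i + (δ i r : A))
    (hcda : ∀ i j : Fin n, i < j →
      x j * x i = (c i j : A) * (x i * x j) + (∑ k, (a i j k : A) * x k) + (d i j : A))
    (hy1 : ∀ (i : Fin n) (r : S), y i * φ r = φ (σ i r) * y i + φ (δ i r))
    (hy2 : ∀ i j : Fin n, i < j →
      y j * y i = φ (c i j) * (y i * y j) + (∑ k, φ (a i j k) * y k) + φ (d i j))
    (m : ℕ) (i : Fin n) : hA.LiftIntertwines φ y m i := by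
  induction m using Nat.strong_induction_on generalizing i with
  | _ m IHm =>
  induction i using WellFoundedLT.induction with
  | _ i IHi =>
  refine hA.liftIntertwines_of_xmon φ y hσδ hy1 fun α hα => ?_
  by_cases hlt : ∀ k < i, α k = 0
  · rw [mul_xmon_of_forall_lt x α i hlt, lift_xmon, mul_xmon_of_forall_lt y α i hlt]
    exact ⟨xmon_mem_xmonDegreeLE (by rw [sum_add_single_one]; omega), rfl⟩
  · push Not at hlt
    obtain ⟨j, hji, β, hβ, rfl⟩ := exists_eq_add_single_of_exists_lt hlt
    rw [sum_add_single_one] at hα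
    obtain ⟨M, rfl⟩ : ∃ M, m = M + 1 := ⟨m - 1, by omega⟩
    exact hA.liftIntertwines_xmon_add_single φ y hcda hy2 hji (IHm M M.lt_succ_self)
      (IHi j hji) hβ (by omega)

theorem lift_x_mul
    (hσδ : ∀ (i : Fin n) (r : S), x i * (r : A) = (σ i r : A) * x i + (δ i r : A))
    (hcda : ∀ i j : Fin n, i < j →
      x j * x i = (c i j : A) * (x i * x j) + (∑ k, (a i j k : A) * x k) + (d i j : A))
    (hy1 : ∀ (i : Fin n) (r : S), y i * φ r = φ (σ i r) * y i + φ (δ i r))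
    (hy2 : ∀ i j : Fin n, i < j →
      y j * y i = φ (c i j) * (y i * y j) + (∑ k, φ (a i j k) * y k) + φ (d i j))
    (i : Fin n) (u : A) : hA.lift φ y (x i * u) = y i * hA.lift φ y u := by
  obtain ⟨m, hm⟩ := hA.exists_mem_xmonDegreeLE u
  exact (hA.liftIntertwines φ y hσδ hcda hy1 hy2 m i u hm).2

theorem lift_xmon_mul (hxy : ∀ i u, hA.lift φ y (x i * u) = y i * hA.lift φ y u)
    (α : Fin n → ℕ) (u : A) : hA.lift φ y (xmon x α * u) = xmon y α * hA.lift φ y u := by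
  have hpow : ∀ i (k : ℕ) u, hA.lift φ y (x i ^ k * u) = y i ^ k * hA.lift φ y u := by
    intro i k
    induction k with
    | zero => simp
    | succ k ih => intro u; rw [pow_succ', pow_succ', mul_assoc, hxy, ih, mul_assoc]
  unfold xmon
  induction List.finRange n generalizing u with
  | nil => simp
  | cons i l ih => simp only [List.map_cons, List.prod_cons, mul_assoc, hpow, ih]

theorem lift_mul (hxy : ∀ i u, hA.lift φ y (x i * u) = y i * hA.lift φ y u) (u v : A) :
    hA.lift φ y (u * v) = hA.lift φ y u * hA.lift φ y v := by
  induction u using hA.induction_on with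
  | monomial α => rw [lift_xmon_mul _ _ _ hxy, lift_xmon]
  | add u u' hu hu' => rw [add_mul, map_add, map_add, hu, hu', add_mul]
  | mul_left r u hu => rw [mul_assoc, lift_coe_mul, lift_coe_mul, hu, mul_assoc]

end IsSkewPBWExt

theorem skewPBW_universal_property_general {A : Type} [Ring A] {n : ℕ}
    (S : Subring A) (x : Fin n → A) (hA : IsSkewPBWExt S x)
    -- the parameters of A
    (σ : Fin n → S →+* S)
    (δ : Fin n → S → S)
    (hσδ : ∀ (i : Fin n) (r : S), x i * (r : A) = (σ i r : A) * x i + (δ i r : A))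
    (c d : Fin n → Fin n → S) (a : Fin n → Fin n → Fin n → S)
    (hcda : ∀ i j : Fin n, i < j →
      x j * x i = (c i j : A) * (x i * x j) + (∑ k, (a i j k : A) * x k) + (d i j : A))
    -- the data in B
    {B : Type} [Ring B] (φ : S →+* B) (y : Fin n → B)
    (hy1 : ∀ (i : Fin n) (r : S), y i * φ r = φ (σ i r) * y i + φ (δ i r))
    (hy2 : ∀ i j : Fin n, i < j →
      y j * y i = φ (c i j) * (y i * y j) + (∑ k, φ (a i j k) * y k) + φ (d i j)) :
    ∃! φt : A →+* B, (∀ r : S, φt r = φ r) ∧ (∀ i, φt (x i) = y i) := by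
  have hxy := hA.lift_x_mul φ y hσδ hcda hy1 hy2
  let φt : A →+* B :=
    { hA.lift φ y with map_one' := hA.lift_one φ y, map_mul' := hA.lift_mul φ y hxy }
  have hφt : ∀ r : S, φt r = φ r := hA.lift_coe φ y
  have hφtx : ∀ i, φt (x i) = y i := fun i => by
    have h := hxy i 1
    rwa [mul_one, hA.lift_one, mul_one] at h
  refine ⟨φt, ⟨hφt, hφtx⟩, fun g ⟨hg, hgx⟩ => hA.ringHom_ext (fun r => ?_) fun i => ?_⟩
  · rw [hg, hφt]
  · rw [hgx, hφtx]

/-- **The universal property of skew PBW extensions.**  If `B` is a ring, `φ : R → B` a ring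
homomorphism and `y₁,…,yₙ ∈ B` satisfy relations (i) and (ii) with respect to the parameters
`σᵢ, δᵢ, c_{ij}, d_{ij}, a_{ij}^{(k)}` of the skew PBW extension `A` of `R`, then there is a
unique ring homomorphism `φ̃ : A → B` with `φ̃ ∘ ι = φ` and `φ̃(xᵢ) = yᵢ`. -/
theorem skewPBW_universal_property {A : Type} [Ring A] {n : ℕ}
    (S : Subring A) (x : Fin n → A) (hA : IsSkewPBWExt S x)
    -- the parameters of A
    (σ : Fin n → S →+* S) (hσinj : ∀ i, Function.Injective (σ i))
    (δ : Fin n → S → S)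
    (hδadd : ∀ (i : Fin n) (r s : S), δ i (r + s) = δ i r + δ i s)
    (hδmul : ∀ (i : Fin n) (r s : S), δ i (r * s) = σ i r * δ i s + δ i r * s)
    (hσδ : ∀ (i : Fin n) (r : S), x i * (r : A) = (σ i r : A) * x i + (δ i r : A))
    (c d : Fin n → Fin n → S) (a : Fin n → Fin n → Fin n → S)
    (hcda : ∀ i j : Fin n, i < j →
      x j * x i = (c i j : A) * (x i * x j) + (∑ k, (a i j k : A) * x k) + (d i j : A))
    -- the data in B
    {B : Type} [Ring B] (φ : S →+* B) (y : Fin n → B)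
    (hy1 : ∀ (i : Fin n) (r : S), y i * φ r = φ (σ i r) * y i + φ (δ i r))
    (hy2 : ∀ i j : Fin n, i < j →
      y j * y i = φ (c i j) * (y i * y j) + (∑ k, φ (a i j k) * y k) + φ (d i j)) :
    ∃! φt : A →+* B, (∀ r : S, φt r = φ r) ∧ (∀ i, φt (x i) = y i) :=
  skewPBW_universal_property_general S x hA σ δ hσδ c d a hcda φ y hy1 hy2
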